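/- Let n ≥ 1, c_1,…,c_n distinct complex numbers, r_0,…,r_n ∈ ℂ, and define H(λ,x) = −(r_0)_{n−1} (x−λ)^{1−n−r_0} ∏_{j=1}^n (x−c_j)^{1−r_j} and F(λ,x) = (x−λ)^{−r_0} ∏_{j=1}^n (x−c_j)^{−r_j} as holomorphic functions on a simply connected domain avoiding λ and all c_j (with fixed branches). Let L_λ = q_0(λ) d^n/dλ^n + ∑_{k=1}^n p_k(λ) d^{n−k}/dλ^{n−k} be the Jordan–Pochhammer operator. Then L_λ(F(λ,x)) = ∂H(λ,x)/∂x. -/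

import Mathlib

open Polynomial Finset Complex

noncomputable def poch (α : ℂ) (m : ℕ) : ℂ := (ascPochhammer ℂ m).eval α

noncomputable def binomC (α : ℂ) (k : ℕ) : ℂ := (descPochhammer ℂ k).eval α / (k.factorial : ℂ)

noncomputable def q0 (n : ℕ) (c : Fin n → ℂ) : Polynomial ℂ := ∏ j, (X - C (c j))

noncomputable def q1 (n : ℕ) (c : Fin n → ℂ) (r : Fin n → ℂ) : Polynomial ℂ :=
  ∑ j, r j • ∏ i ∈ Finset.univ.erase j, (X - C (c i))


lemma poch_zero (α : ℂ) : poch α 0 = 1 := by simp [poch, ascPochhammer_zero]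

lemma poch_succ (α : ℂ) (m : ℕ) : poch α (m+1) = poch α m * (α + m) := by
  simp [poch, ascPochhammer_succ_right]

lemma descP_succ (α : ℂ) (m : ℕ) :
    (descPochhammer ℂ (m+1)).eval α = (descPochhammer ℂ m).eval α * (α - m) := by
  simp [descPochhammer_succ_right]

lemma binomC_mul_factorial (α : ℂ) (k : ℕ) :
    binomC α k * (k.factorial : ℂ) = (descPochhammer ℂ k).eval α := by
  rw [binomC, div_mul_cancel₀]
  exact_mod_cast Nat.cast_ne_zero.2 k.factorial_ne_zero

lemma key1 (n : ℕ) (r0 : ℂ) :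
    ∀ i, i + 1 ≤ n →
      (descPochhammer ℂ i).eval ((n:ℂ) + r0 - 2) * poch r0 (n - 1 - i) = poch r0 (n - 1) := by
  intro i
  induction i with
  | zero => intro _; simp [descPochhammer_zero]
  | succ i ih =>
    intro h
    have h' : i + 1 ≤ n := by omega
    have e1 : n - 1 - i = (n - 1 - (i+1)) + 1 := by omega
    have e2 : ((n - 1 - (i+1) : ℕ) : ℂ) = (n:ℂ) - 2 - i := by
      have : (n - 1 - (i+1) : ℕ) = n - (i + 2) := by omega
      rw [this, Nat.cast_sub (by omega)]
      push_cast; ring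
    have := ih h'
    rw [e1] at this
    rw [poch_succ, e2] at this
    rw [descP_succ]
    calc (descPochhammer ℂ i).eval ((n:ℂ) + r0 - 2) * ((n:ℂ) + r0 - 2 - i) *
          poch r0 (n - 1 - (i+1))
        = (descPochhammer ℂ i).eval ((n:ℂ) + r0 - 2) *
            (poch r0 (n - 1 - (i+1)) * (r0 + ((n:ℂ) - 2 - i))) := by ring
      _ = poch r0 (n - 1) := this

lemma key2 (n : ℕ) (r0 : ℂ) (i : ℕ) (h : i + 1 ≤ n) :
    (descPochhammer ℂ (i+1)).eval ((n:ℂ) + r0 - 2) * poch r0 (n - 1 - i)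
      = poch r0 n - ((i:ℂ) + 1) * poch r0 (n - 1) := by
  have h1 := key1 n r0 i h
  have hn : poch r0 n = poch r0 (n-1) * (r0 + ((n:ℂ) - 1)) := by
    conv_lhs => rw [show n = (n-1)+1 by omega, poch_succ]
    rw [Nat.cast_sub (by omega : 1 ≤ n)]; push_cast; ring
  rw [descP_succ, hn]
  calc (descPochhammer ℂ i).eval ((n:ℂ) + r0 - 2) * ((n:ℂ) + r0 - 2 - i) * poch r0 (n-1-i)
      = (descPochhammer ℂ i).eval ((n:ℂ) + r0 - 2) * poch r0 (n-1-i) * ((n:ℂ) + r0 - 2 - i) := by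
        ring
    _ = poch r0 (n-1) * ((n:ℂ) + r0 - 2 - i) := by rw [h1]
    _ = poch r0 (n-1) * (r0 + ((n:ℂ)-1)) - ((i:ℂ)+1) * poch r0 (n-1) := by ring

lemma natDegree_q0_le (n : ℕ) (c : Fin n → ℂ) : (q0 n c).natDegree ≤ n := by
  refine (Polynomial.natDegree_prod_le _ _).trans ?_
  simp [natDegree_X_sub_C]

lemma natDegree_q1_le (n : ℕ) (c r : Fin n → ℂ) : (q1 n c r).natDegree ≤ n - 1 := by
  refine Polynomial.natDegree_sum_le_of_forall_le _ _ fun j _ => ?_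
  refine (Polynomial.natDegree_smul_le _ _).trans ?_
  refine (Polynomial.natDegree_prod_le _ _).trans ?_
  simp [natDegree_X_sub_C, Finset.card_erase_of_mem]

lemma taylor_expand (p : ℂ[X]) (N : ℕ) (hp : p.natDegree < N) (lam x : ℂ) :
    p.eval x = ∑ i ∈ Finset.range N, (Polynomial.hasseDeriv i p).eval lam * (x - lam)^i := by
  rw [← Polynomial.taylor_eval_sub lam p x,
    Polynomial.eval_eq_sum_range' (by rwa [Polynomial.natDegree_taylor])]
  simp [Polynomial.taylor_coeff]

lemma iter_deriv_eval (k : ℕ) (p : ℂ[X]) (z : ℂ) :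
    (Polynomial.derivative^[k] p).eval z
      = (k.factorial : ℂ) * (Polynomial.hasseDeriv k p).eval z := by
  have h : (Polynomial.derivative (R := ℂ))^[k] p = k.factorial • (Polynomial.hasseDeriv k p) := by
    rw [← Polynomial.factorial_smul_hasseDeriv]; rfl
  rw [h]
  simp [nsmul_eq_mul]

lemma hasseDeriv_derivative' (i : ℕ) (p : ℂ[X]) :
    Polynomial.hasseDeriv i (Polynomial.derivative p)
      = ((i+1 : ℕ) : ℂ) • Polynomial.hasseDeriv (i+1) p := by
  rw [← Polynomial.hasseDeriv_one]
  have h := Polynomial.hasseDeriv_comp (R := ℂ) i 1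
  have h2 := congrArg (fun L => L p) h
  simp only [LinearMap.comp_apply, LinearMap.smul_apply] at h2
  rw [h2, Nat.choose_succ_self_right]
  simp [nsmul_eq_mul, Polynomial.smul_eq_C_mul]

lemma key_alg (n : ℕ) (hn : 1 ≤ n) (c r : Fin n → ℂ) (r0 lam x : ℂ) :
    (q0 n c).eval lam * poch r0 n +
      ∑ k ∈ Finset.Icc 1 n,
        (binomC ((n:ℂ) + r0 - 2) k * (Polynomial.derivative^[k] (q0 n c)).eval lam +
          binomC ((n:ℂ) + r0 - 2) (k - 1) *
            (Polynomial.derivative^[k - 1] (q1 n c r)).eval lam) *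
          poch r0 (n - k) * (x - lam)^k
    = poch r0 n * (q0 n c).eval x
      - poch r0 (n - 1) * (x - lam) *
          ((Polynomial.derivative (q0 n c)).eval x - (q1 n c r).eval x) := by
  set t := x - lam with ht
  set α := (n:ℂ) + r0 - 2 with hα
  have hq0 : (q0 n c).eval x
      = ∑ i ∈ Finset.range (n+1), (Polynomial.hasseDeriv i (q0 n c)).eval lam * t^i :=
    taylor_expand _ _ (Nat.lt_succ_of_le (natDegree_q0_le n c)) lam x
  have hq0' : (Polynomial.derivative (q0 n c)).eval x
      = ∑ i ∈ Finset.range n,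
          (Polynomial.hasseDeriv i (Polynomial.derivative (q0 n c))).eval lam * t^i := by
    refine taylor_expand _ _ ?_ lam x
    exact lt_of_le_of_lt ((Polynomial.natDegree_derivative_le _).trans
      (Nat.sub_le_sub_right (natDegree_q0_le n c) 1)) (by omega)
  have hq1 : (q1 n c r).eval x
      = ∑ i ∈ Finset.range n, (Polynomial.hasseDeriv i (q1 n c r)).eval lam * t^i := by
    refine taylor_expand _ _ ?_ lam x
    exact lt_of_le_of_lt (natDegree_q1_le n c r) (by omega)
  rw [hq0, hq0', hq1, Finset.sum_range_succ']
  simp only [Polynomial.hasseDeriv_zero, LinearMap.id_apply, pow_zero, mul_one]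
  rw [← Finset.Ico_add_one_right_eq_Icc, Finset.sum_Ico_eq_sum_range]
  have hterm : ∀ i ∈ Finset.range n,
      (binomC α (1 + i) * (Polynomial.derivative^[1 + i] (q0 n c)).eval lam +
        binomC α (1 + i - 1) * (Polynomial.derivative^[1 + i - 1] (q1 n c r)).eval lam) *
        poch r0 (n - (1 + i)) * t^(1 + i)
      = poch r0 n * ((Polynomial.hasseDeriv (i+1) (q0 n c)).eval lam * t^(i+1))
        - poch r0 (n-1) * t *
            ((Polynomial.hasseDeriv i (Polynomial.derivative (q0 n c))).eval lam * t^i)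
        + poch r0 (n-1) * t * ((Polynomial.hasseDeriv i (q1 n c r)).eval lam * t^i) := by
    intro i hi
    have hi' : i + 1 ≤ n := Finset.mem_range.1 hi
    have e1 : 1 + i = i + 1 := by omega
    have e2 : 1 + i - 1 = i := by omega
    have e3 : n - (1 + i) = n - 1 - i := by omega
    rw [e2, e3, e1, iter_deriv_eval, iter_deriv_eval, hasseDeriv_derivative', eval_smul]
    have h2 := key2 n r0 i hi'
    have h1 := key1 n r0 i hi'
    have hb1 := binomC_mul_factorial α (i+1)
    have hb0 := binomC_mul_factorial α i
    set a := (Polynomial.hasseDeriv (i+1) (q0 n c)).eval lam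
    set b := (Polynomial.hasseDeriv i (q1 n c r)).eval lam
    rw [hα] at hb1 hb0 ⊢
    simp only [smul_eq_mul]
    push_cast
    linear_combination (a * t^(i+1)) * h2 + (b * t^(i+1)) * h1
      + (a * poch r0 (n-1-i) * t^(i+1)) * hb1 + (b * poch r0 (n-1-i) * t^(i+1)) * hb0
  rw [Nat.add_sub_cancel, Finset.sum_congr rfl hterm]
  simp only [Finset.sum_add_distrib, Finset.sum_sub_distrib, ← Finset.mul_sum]
  ring

lemma q0_eval (n : ℕ) (c : Fin n → ℂ) (z : ℂ) :
    (q0 n c).eval z = ∏ j, (z - c j) := by simp [q0, eval_prod]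

lemma q0'_eval (n : ℕ) (c : Fin n → ℂ) (z : ℂ) :
    (Polynomial.derivative (q0 n c)).eval z = ∑ j, ∏ i ∈ Finset.univ.erase j, (z - c i) := by
  have h1 : HasDerivAt (fun w => (q0 n c).eval w) ((Polynomial.derivative (q0 n c)).eval z) z :=
    (q0 n c).hasDerivAt z
  have hfun : (fun w => (q0 n c).eval w) = fun w => ∏ j, (w - c j) := funext (q0_eval n c)
  rw [hfun] at h1
  have h2 : HasDerivAt (fun w : ℂ => ∏ j, (w - c j))
      (∑ j, (∏ i ∈ Finset.univ.erase j, (z - c i)) • (1:ℂ)) z :=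
    HasDerivAt.fun_finsetProd (fun j _ => (hasDerivAt_id z).sub_const (c j))
  rw [h1.unique h2]
  simp

lemma q1_eval (n : ℕ) (c r : Fin n → ℂ) (z : ℂ) :
    (q1 n c r).eval z = ∑ j, r j * ∏ i ∈ Finset.univ.erase j, (z - c i) := by
  simp [q1, Polynomial.eval_finset_sum, eval_prod]

lemma iterF (x r0 P : ℂ) (m : ℕ) :
    ∀ l : ℂ, x - l ∈ Complex.slitPlane →
      iteratedDeriv m (fun l' : ℂ => (x - l') ^ (-r0) * P) l
        = poch r0 m * (x - l) ^ (-r0 - m) * P := by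
  induction m with
  | zero =>
    intro l hl
    simp [iteratedDeriv_zero, poch_zero]
  | succ m ih =>
    intro l hl
    rw [iteratedDeriv_succ]
    have hopen : IsOpen {l' : ℂ | x - l' ∈ Complex.slitPlane} :=
      Complex.isOpen_slitPlane.preimage (by fun_prop)
    have hev : iteratedDeriv m (fun l' : ℂ => (x - l') ^ (-r0) * P)
        =ᶠ[nhds l] fun l' => poch r0 m * (x - l') ^ (-r0 - m) * P := by
      filter_upwards [hopen.mem_nhds hl] with l' hl' using ih l' hl'
    rw [hev.deriv_eq]
    have hd : HasDerivAt (fun l' : ℂ => poch r0 m * (x - l') ^ (-r0 - m) * P)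
        (poch r0 m * ((-r0 - m) * (x - l) ^ (-r0 - m - 1) * (-1)) * P) l :=
      ((((hasDerivAt_id l).const_sub x).cpow_const hl).const_mul (poch r0 m)).mul_const P
    rw [hd.deriv, poch_succ]
    push_cast
    rw [show -r0 - ((m : ℂ) + 1) = -r0 - m - 1 by ring]
    ring

/-- The potential lemma (Lemma 4.1): with
`H(λ,x) = −(r_0)_{n−1} (x−λ)^{1−n−r_0} ∏ (x−c_j)^{1−r_j}` and
`F(λ) = (x−λ)^{−r_0} ∏ (x−c_j)^{−r_j}` (holomorphic branches given by `Complex.cpow`,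
valid on the slit plane), the Jordan–Pochhammer operator applied to `F` equals `∂H/∂x`. -/
theorem jordan_pochhammer_potential (n : ℕ) (hn : 1 ≤ n) (c : Fin n → ℂ)
    (hc : Function.Injective c) (r0 : ℂ) (r : Fin n → ℂ) (x lam : ℂ)
    (h1 : x - lam ∈ Complex.slitPlane) (h2 : ∀ j, x - c j ∈ Complex.slitPlane)
    (F : ℂ → ℂ) (hF : F = fun l : ℂ => (x - l) ^ (-r0) * ∏ j, (x - c j) ^ (-(r j)))
    (H : ℂ → ℂ → ℂ)
    (hH : H = fun l y : ℂ => -poch r0 (n - 1) * (y - l) ^ ((1 : ℂ) - (n : ℂ) - r0) *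
      ∏ j, (y - c j) ^ ((1 : ℂ) - r j)) :
    (q0 n c).eval lam * iteratedDeriv n F lam +
      ∑ k ∈ Finset.Icc 1 n,
        (binomC ((n : ℂ) + r0 - 2) k * (Polynomial.derivative^[k] (q0 n c)).eval lam +
          binomC ((n : ℂ) + r0 - 2) (k - 1) *
            (Polynomial.derivative^[k - 1] (q1 n c r)).eval lam) *
          iteratedDeriv (n - k) F lam =
    deriv (fun y => H lam y) x := by
  have ht : x - lam ≠ 0 := slitPlane_ne_zero h1
  have hu : ∀ j, x - c j ≠ 0 := fun j => slitPlane_ne_zero (h2 j)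
  set P : ℂ := ∏ j, (x - c j) ^ (-(r j)) with hP
  set D : ℂ := (x - lam) ^ (-r0) / (x - lam)^n * P with hD
  -- iterated derivatives of F
  have hIter : ∀ m : ℕ, m ≤ n →
      iteratedDeriv m F lam = D * (poch r0 m * (x - lam)^(n - m)) := by
    intro m hm
    rw [hF, iterF x r0 P m lam h1, cpow_sub _ _ ht, cpow_natCast]
    have hpow : (x - lam)^m * (x - lam)^(n-m) = (x - lam)^n := by
      rw [← pow_add]; congr 1; omega
    rw [hD]
    field_simp
    linear_combination (-(poch r0 m * (x - lam) ^ (-r0) * P)) * hpow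
  -- derivative of H in y at x
  have hderiv : deriv (fun y => H lam y) x =
      -poch r0 (n-1) * (((1:ℂ) - n - r0) * (x - lam) ^ ((1:ℂ) - n - r0 - 1) * 1) *
        (∏ j, (x - c j) ^ ((1:ℂ) - r j)) +
      (-poch r0 (n-1) * (x - lam) ^ ((1:ℂ) - n - r0)) *
        (∑ j, (∏ i ∈ Finset.univ.erase j, (x - c i) ^ ((1:ℂ) - r i)) •
          (((1:ℂ) - r j) * (x - c j) ^ ((1:ℂ) - r j - 1) * 1)) := by
    have h0 : HasDerivAt (fun y : ℂ => (y - lam) ^ ((1:ℂ) - n - r0))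
        (((1:ℂ) - n - r0) * (x - lam) ^ ((1:ℂ) - n - r0 - 1) * 1) x :=
      ((hasDerivAt_id x).sub_const lam).cpow_const h1
    have hj : ∀ j : Fin n, HasDerivAt (fun y : ℂ => (y - c j) ^ ((1:ℂ) - r j))
        (((1:ℂ) - r j) * (x - c j) ^ ((1:ℂ) - r j - 1) * 1) x :=
      fun j => ((hasDerivAt_id x).sub_const (c j)).cpow_const (h2 j)
    have hprod : HasDerivAt (fun y : ℂ => ∏ j, (y - c j) ^ ((1:ℂ) - r j))
        (∑ j, (∏ i ∈ Finset.univ.erase j, (x - c i) ^ ((1:ℂ) - r i)) •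
          (((1:ℂ) - r j) * (x - c j) ^ ((1:ℂ) - r j - 1) * 1)) x :=
      HasDerivAt.fun_finsetProd (fun j _ => hj j)
    have hmul := (h0.const_mul (-poch r0 (n-1))).mul hprod
    simp only [hH]
    exact hmul.deriv
  -- cpow rewrites
  have c1 : (x - lam) ^ ((1:ℂ) - n - r0 - 1) = (x - lam)^(-r0) / (x - lam)^n := by
    rw [show (1:ℂ) - n - r0 - 1 = -r0 - n by ring, cpow_sub _ _ ht, cpow_natCast]
  have c2 : (x - lam) ^ ((1:ℂ) - n - r0) = (x - lam)^(-r0) / (x - lam)^n * (x - lam) := by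
    rw [show (1:ℂ) - n - r0 = (-r0 - n) + 1 by ring, cpow_add _ _ ht, cpow_sub _ _ ht,
      cpow_natCast, cpow_one]
  have c3 : ∀ j, (x - c j) ^ ((1:ℂ) - r j) = (x - c j) * (x - c j)^(-(r j)) := fun j => by
    rw [show (1:ℂ) - r j = 1 + -(r j) by ring, cpow_add _ _ (hu j), cpow_one]
  have c4 : ∀ j, (x - c j) ^ ((1:ℂ) - r j - 1) = (x - c j)^(-(r j)) := fun j => by
    congr 1; ring
  have p1 : (∏ j, (x - c j) ^ ((1:ℂ) - r j)) = (q0 n c).eval x * P := by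
    simp only [c3]
    rw [Finset.prod_mul_distrib, q0_eval]
  have hsum2 : (∑ j, (∏ i ∈ Finset.univ.erase j, (x - c i) ^ ((1:ℂ) - r i)) •
          (((1:ℂ) - r j) * (x - c j) ^ ((1:ℂ) - r j - 1) * 1))
      = ((Polynomial.derivative (q0 n c)).eval x - (q1 n c r).eval x) * P := by
    have hj : ∀ j ∈ (Finset.univ : Finset (Fin n)),
        (∏ i ∈ Finset.univ.erase j, (x - c i) ^ ((1:ℂ) - r i)) •
          (((1:ℂ) - r j) * (x - c j) ^ ((1:ℂ) - r j - 1) * 1)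
        = (((1:ℂ) - r j) * ∏ i ∈ Finset.univ.erase j, (x - c i)) * P := by
      intro j _
      rw [c4 j]
      simp only [c3, Finset.prod_mul_distrib, smul_eq_mul, mul_one]
      have := Finset.prod_erase_mul Finset.univ (fun i => (x - c i)^(-(r i)))
        (Finset.mem_univ j)
      rw [hP, ← this]
      ring
    rw [Finset.sum_congr rfl hj, ← Finset.sum_mul]
    congr 1
    rw [q0'_eval, q1_eval, ← Finset.sum_sub_distrib]
    exact Finset.sum_congr rfl fun j _ => by ring
  have hAe0 : -poch r0 (n-1) * ((1:ℂ) - n - r0) = poch r0 n := by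
    conv_rhs => rw [show n = (n-1)+1 by omega, poch_succ]
    rw [Nat.cast_sub (by omega : 1 ≤ n)]
    push_cast; ring
  have hR : deriv (fun y => H lam y) x
      = D * (poch r0 n * (q0 n c).eval x
          - poch r0 (n-1) * (x - lam) *
            ((Polynomial.derivative (q0 n c)).eval x - (q1 n c r).eval x)) := by
    rw [hderiv, c1, c2, p1, hsum2, hD]
    linear_combination ((q0 n c).eval x * ((x - lam)^(-r0) / (x-lam)^n) * P) * hAe0
  have hLsum : ∀ k ∈ Finset.Icc 1 n,
      (binomC ((n : ℂ) + r0 - 2) k * (Polynomial.derivative^[k] (q0 n c)).eval lam +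
        binomC ((n : ℂ) + r0 - 2) (k - 1) *
          (Polynomial.derivative^[k - 1] (q1 n c r)).eval lam) *
        iteratedDeriv (n - k) F lam
      = D * ((binomC ((n : ℂ) + r0 - 2) k * (Polynomial.derivative^[k] (q0 n c)).eval lam +
          binomC ((n : ℂ) + r0 - 2) (k - 1) *
            (Polynomial.derivative^[k - 1] (q1 n c r)).eval lam) *
          poch r0 (n - k) * (x - lam)^k) := by
    intro k hk
    have hk' := Finset.mem_Icc.1 hk
    rw [hIter (n-k) (by omega), show n - (n-k) = k by omega]
    ring
  rw [hIter n le_rfl, show n - n = 0 by omega, pow_zero,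
    Finset.sum_congr rfl hLsum, ← Finset.mul_sum, hR]
  linear_combination D * key_alg n hn c r r0 lam x
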